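/- arXiv:2505.12578 — 6 statements merged into one kernel-verified Lean document; each statement's English description precedes it below -/
import Mathlib

section
/- Let T be a random (n+1)×(d+1) real matrix that is exchangeable, i.e. T and ΠT have the same distribution for every (n+1)×(n+1) permutation matrix Π. Let Q be a random (n+1)×(n+1) permutation matrix, uniformly distributed on the set of permutation matrices and independent of T. Fix K ≥ 2 with n+1 = Kt, write Q in blocks Q_1,…,Q_K of t rows each, let φ(i) ∈ {1,…,K} be the fold to which row i is assigned (φ(i)=k iff some row of Q_k has a 1 in column i), and let Q_{∖k} be the (n+1−t)×(n+1) matrix obtained from Q by deleting the block Q_k. For m = 1,…,M let μ̂_m : ℝ^{(n+1−t)×(d+1)} × ℝ^d → ℝ be measurable functions satisfying μ̂_m(S, x) = μ̂_m(ΠS, x) for every (n+1−t)×(n+1−t) permutation matrix Π, every S and every x. Write the rows of T as (X_i, Y_i) with X_i ∈ ℝ^d, Y_i ∈ ℝ, and define Z_{i,m} = μ̂_m(Q_{∖φ(i)} T, X_i) and Z_i = (Z_{i,1},…,Z_{i,M}) ∈ ℝ^M. Then the random pairs (Z_1, Y_1), …, (Z_{n+1}, Y_{n+1}) are exchangeable: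 for every (n+1)×(n+1) permutation matrix Π, the (n+1)×(M+1) random matrix U with rows (Z_i, Y_i) satisfies that U and ΠU have the same distribution. -/
open MeasureTheory Matrix
open scoped ENNReal

/-- Matrices inherit the product measurable structure of functions. -/
instance matrixMeasurableSpace {m n α : Type*} [MeasurableSpace α] :
    MeasurableSpace (Matrix m n α) :=
  (inferInstance : MeasurableSpace (m → n → α))

/-- The finite type of permutations carries the discrete (⊤) measurable structure. -/
instance permMeasurableSpace {N : ℕ} : MeasurableSpace (Equiv.Perm (Fin N)) := ⊤

/-- The row-selection map that deletes the `k`-th (0-indexed) size-`t` block of rows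
from `n + 1 = K·t` rows: `Matrix.submatrix · (exclude ht k) id` realizes the fold-`k`
exclusion matrix `Q_{∖k}` applied to a permutation matrix `Q`. -/
def exclude {n t : ℕ} (ht : t ≤ n + 1) (k : ℕ) (j : Fin (n + 1 - t)) : Fin (n + 1) :=
  if (j : ℕ) < k * t then ⟨j, by have := j.isLt; omega⟩
  else ⟨(j : ℕ) + t, by have := j.isLt; omega⟩

/-- The (0-indexed) fold `φ(i)` of training index `i` under the folding scheme given by
the permutation matrix of `σ`: the unique `k` such that some row of the `k`-th size-`t`
row block of the permutation matrix of `σ` has a `1` in column `i`; since row `r` of the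
permutation matrix has its `1` in column `σ(r)`, this is `⌊σ⁻¹(i)/t⌋`. -/
def fold (t : ℕ) {n : ℕ} (σ : Equiv.Perm (Fin (n + 1))) (i : Fin (n + 1)) : ℕ :=
  (σ.symm i : ℕ) / t

/-- The second-level matrix `U` of the stack: its `i`-th row is `(Z_i, Y_i)`, where
`Z_{i,m} = μ̂_m(Q_{∖φ(i)} T, X_i)`, `X_i ∈ ℝ^d` is the features part of row `i` of the
data matrix `T`, and `Y_i` its response (last) entry. -/
noncomputable def stackMap {n t d M : ℕ} (ht : t ≤ n + 1)
    (muHat : Fin M → Matrix (Fin (n + 1 - t)) (Fin (d + 1)) ℝ → (Fin d → ℝ) → ℝ)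
    (T : Matrix (Fin (n + 1)) (Fin (d + 1)) ℝ) (σ : Equiv.Perm (Fin (n + 1))) :
    Matrix (Fin (n + 1)) (Fin (M + 1)) ℝ :=
  Matrix.of fun i =>
    (Fin.snoc
      (fun m => muHat m
        ((σ.permMatrix ℝ).submatrix (exclude ht (fold t σ i)) id * T)
        (fun j => T i j.castSucc))
      (T i (Fin.last d)) : Fin (M + 1) → ℝ)

-- key pointwise identity
lemma perm_stackMap {n t d M : ℕ} (ht : t ≤ n + 1)
    (muHat : Fin M → Matrix (Fin (n + 1 - t)) (Fin (d + 1)) ℝ → (Fin d → ℝ) → ℝ)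
    (T : Matrix (Fin (n + 1)) (Fin (d + 1)) ℝ) (σ P : Equiv.Perm (Fin (n + 1))) :
    P.permMatrix ℝ * stackMap ht muHat T σ
      = stackMap ht muHat (P.permMatrix ℝ * T) (σ.trans P.symm) := by
  have hP : ∀ (c : ℕ) (A : Matrix (Fin (n+1)) (Fin c) ℝ) (f : Equiv.Perm (Fin (n+1))),
      f.permMatrix ℝ * A = A.submatrix f id := fun c A f =>
    PEquiv.toMatrix_toPEquiv_mul f A
  rw [hP, hP]
  ext i j
  simp only [stackMap, Matrix.submatrix_apply, Matrix.of_apply, id]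
  have hfold : fold t (σ.trans P.symm) i = fold t σ (P i) := by
    simp [fold, Equiv.symm_trans_apply]
  rw [hfold]
  have hP2 : ∀ (c : ℕ) (A : Matrix (Fin (n+1)) (Fin c) ℝ) (f : Equiv.Perm (Fin (n+1)))
      (g : Fin (n + 1 - t) → Fin (n + 1)),
      (f.permMatrix ℝ).submatrix g id * A = A.submatrix (fun r => f (g r)) id := by
    intro c A f g
    ext r j
    have h1 : ((f.permMatrix ℝ).submatrix g id * A) r j = ((f.permMatrix ℝ) * A) (g r) j := by
      simp [Matrix.mul_apply]
    rw [h1, hP]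
    rfl
  congr 1
  · ext m
    congr 1
    · rw [hP2, hP2]
      ext r c
      simp [Matrix.submatrix_apply, Equiv.trans_apply]

lemma measurable_stackMap {n t d M : ℕ} (ht : t ≤ n + 1)
    (muHat : Fin M → Matrix (Fin (n + 1 - t)) (Fin (d + 1)) ℝ → (Fin d → ℝ) → ℝ)
    (hmeas : ∀ m, Measurable
      (fun p : Matrix (Fin (n + 1 - t)) (Fin (d + 1)) ℝ × (Fin d → ℝ) => muHat m p.1 p.2))
    (σ : Equiv.Perm (Fin (n + 1))) :
    Measurable (fun A => stackMap ht muHat A σ) := by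
  apply measurable_pi_lambda
  intro i
  apply measurable_pi_lambda
  intro j
  induction j using Fin.lastCases with
  | last =>
    simp only [stackMap, Matrix.of_apply, Fin.snoc_last]
    exact (measurable_pi_apply _).comp (measurable_pi_apply i)
  | cast m =>
    simp only [stackMap, Matrix.of_apply, Fin.snoc_castSucc]
    have h1 : Measurable (fun A : Matrix (Fin (n + 1)) (Fin (d + 1)) ℝ =>
        ((σ.permMatrix ℝ).submatrix (exclude ht (fold t σ i)) id * A)) := by
      apply measurable_pi_lambda; intro r; apply measurable_pi_lambda; intro c
      simp only [Matrix.mul_apply]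
      apply Finset.measurable_sum
      intro k _
      exact measurable_const.mul ((measurable_pi_apply c).comp (measurable_pi_apply k))
    have h2 : Measurable (fun A : Matrix (Fin (n + 1)) (Fin (d + 1)) ℝ =>
        (fun j : Fin d => A i j.castSucc)) := by
      apply measurable_pi_lambda; intro c
      exact (measurable_pi_apply _).comp (measurable_pi_apply i)
    exact (hmeas m).comp (h1.prodMk h2)

instance permMSC {N : ℕ} : MeasurableSingletonClass (Equiv.Perm (Fin N)) :=
  ⟨fun _ => MeasurableSpace.measurableSet_top⟩


/-- Proposition 1: for the symmetric stack, the exchangeability of the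
training sample `T` is transferred to the second level of the stack.  If `T` is an
exchangeable random `(n+1)×(d+1)` matrix, `Q` a uniformly distributed random
`(n+1)×(n+1)` permutation matrix (encoded by a uniformly random permutation)
independent of `T`, `n + 1 = K·t` with `K ≥ 2` folds of size `t`, and each base learner
`μ̂_m` is measurable and treats its training data symmetrically, then the random matrix
`U` with rows `(Z_i, Y_i)` satisfies: `U` and `ΠU` have the same distribution for every
permutation matrix `Π`; i.e. the pairs `(Z_1,Y_1),…,(Z_{n+1},Y_{n+1})` are
exchangeable. -/
theorem symmetric_stack_exchangeable
    {Ω : Type*} [MeasurableSpace Ω] (μ : Measure Ω) [IsProbabilityMeasure μ]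
    {n d K t M : ℕ} (hK : 2 ≤ K) (hn : n + 1 = K * t) (ht : t ≤ n + 1)
    (T : Ω → Matrix (Fin (n + 1)) (Fin (d + 1)) ℝ) (hT : Measurable T)
    (hTexch : ∀ P : Equiv.Perm (Fin (n + 1)),
      Measure.map (fun ω => P.permMatrix ℝ * T ω) μ = Measure.map T μ)
    (Q : Ω → Equiv.Perm (Fin (n + 1))) (hQmeas : Measurable Q)
    (hQunif : ∀ q : Equiv.Perm (Fin (n + 1)),
      μ (Q ⁻¹' {q}) = ((n + 1).factorial : ℝ≥0∞)⁻¹)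
    (hindep : ProbabilityTheory.IndepFun T Q μ)
    (muHat : Fin M → Matrix (Fin (n + 1 - t)) (Fin (d + 1)) ℝ → (Fin d → ℝ) → ℝ)
    (hmeas : ∀ m, Measurable
      (fun p : Matrix (Fin (n + 1 - t)) (Fin (d + 1)) ℝ × (Fin d → ℝ) => muHat m p.1 p.2))
    (hsymm : ∀ (m : Fin M) (P : Equiv.Perm (Fin (n + 1 - t)))
      (S : Matrix (Fin (n + 1 - t)) (Fin (d + 1)) ℝ) (x : Fin d → ℝ),
      muHat m (P.permMatrix ℝ * S) x = muHat m S x) :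
    ∀ P : Equiv.Perm (Fin (n + 1)),
      Measure.map (fun ω => P.permMatrix ℝ * stackMap ht muHat (T ω) (Q ω)) μ
        = Measure.map (fun ω => stackMap ht muHat (T ω) (Q ω)) μ := by
  intro P
  -- the joint map F
  set F : Matrix (Fin (n + 1)) (Fin (d + 1)) ℝ × Equiv.Perm (Fin (n + 1))
      → Matrix (Fin (n + 1)) (Fin (M + 1)) ℝ :=
    fun p => stackMap ht muHat p.1 p.2 with hFdef
  have hF : Measurable F :=
    measurable_from_prod_countable_left (fun σ => measurable_stackMap ht muHat hmeas σ)
  -- transformed T and Q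
  have hT' : Measurable (fun ω => P.permMatrix ℝ * T ω) := by
    have hmul : Measurable (fun A : Matrix (Fin (n + 1)) (Fin (d + 1)) ℝ =>
        P.permMatrix ℝ * A) := by
      apply measurable_pi_lambda; intro r; apply measurable_pi_lambda; intro c
      simp only [Matrix.mul_apply]
      exact Finset.measurable_sum _ fun k _ =>
        measurable_const.mul ((measurable_pi_apply c).comp (measurable_pi_apply k))
    exact hmul.comp hT
  have hQ' : Measurable (fun ω => (Q ω).trans P.symm) :=
    (measurable_from_top (f := fun σ : Equiv.Perm (Fin (n + 1)) => σ.trans P.symm)).comp hQmeas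
  -- pointwise identity
  have hkey : (fun ω => P.permMatrix ℝ * stackMap ht muHat (T ω) (Q ω))
      = fun ω => F (P.permMatrix ℝ * T ω, (Q ω).trans P.symm) :=
    funext fun ω => perm_stackMap ht muHat (T ω) (Q ω) P
  rw [hkey]
  -- rewrite both maps through F
  have e1 : Measure.map (fun ω => F (P.permMatrix ℝ * T ω, (Q ω).trans P.symm)) μ
      = Measure.map F (Measure.map
          (fun ω => (P.permMatrix ℝ * T ω, (Q ω).trans P.symm)) μ) :=
    (Measure.map_map hF (hT'.prodMk hQ')).symm
  have e2 : Measure.map (fun ω => stackMap ht muHat (T ω) (Q ω)) μ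
      = Measure.map F (Measure.map (fun ω => (T ω, Q ω)) μ) :=
    (Measure.map_map hF (hT.prodMk hQmeas)).symm
  rw [e1, e2]
  congr 1
  -- independence of transformed pair
  have hindep' : ProbabilityTheory.IndepFun
      (fun ω => P.permMatrix ℝ * T ω) (fun ω => (Q ω).trans P.symm) μ := by
    have := hindep.comp (φ := fun A => P.permMatrix ℝ * A)
      (ψ := fun σ : Equiv.Perm (Fin (n + 1)) => σ.trans P.symm)
      (by
        apply measurable_pi_lambda; intro r; apply measurable_pi_lambda; intro c
        simp only [Matrix.mul_apply]
        exact Finset.measurable_sum _ fun k _ =>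
          measurable_const.mul ((measurable_pi_apply c).comp (measurable_pi_apply k)))
      measurable_from_top
    exact this
  rw [(ProbabilityTheory.indepFun_iff_map_prod_eq_prod_map_map
      hT'.aemeasurable hQ'.aemeasurable).mp hindep',
    (ProbabilityTheory.indepFun_iff_map_prod_eq_prod_map_map
      hT.aemeasurable hQmeas.aemeasurable).mp hindep]
  congr 1
  · exact hTexch P
  · -- uniform law invariant under right translation
    apply MeasureTheory.Measure.ext_of_singleton
    intro q
    rw [Measure.map_apply hQ' MeasurableSpace.measurableSet_top,
      Measure.map_apply hQmeas MeasurableSpace.measurableSet_top]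
    have hset : (fun ω => (Q ω).trans P.symm) ⁻¹' {q} = Q ⁻¹' {q.trans P} := by
      ext ω
      simp only [Set.mem_preimage, Set.mem_singleton_iff]
      constructor
      · intro h
        rw [← h]
        ext x
        simp
      · intro h
        rw [h]
        ext x
        simp
    rw [hset, hQunif, hQunif]
end

section
/- Let (Z_1, Y_1), …, (Z_{n+1}, Y_{n+1}) be exchangeable random pairs with Z_i ∈ ℝ^M and Y_i ∈ ℝ. For each y ∈ ℝ let ψ̂_n^{(y)} : ℝ^M → ℝ be a (measurable) prediction function constructed from the sample {(Z_1, Y_1), …, (Z_n, Y_n), (Z_{n+1}, y)} in a way that is invariant under any reordering of these n+1 pairs. For a measurable conformity function ρ : ℝ × ℝ → ℝ define the conformity scores R_i^{(y)} = ρ(Y_i, ψ̂_n^{(y)}(Z_i)) for i = 1,…,n+1, and let R_{(1)}^{(y)} ≤ ⋯ ≤ R_{(n)}^{(y)} be the order statistics of {R_1^{(y)},…,R_n^{(y)}}. Fix 0 < α < 1 with ⌈(1−α)(n+1)⌉ ≤ n, and define the random prediction set C_{n+1}^{(α)} = { y ∈ ℝ : R_{n+1}^{(y)} ≤ R_{(⌈(1−α)(n+1)⌉)}^{(y)}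 }. Then Pr( Y_{n+1} ∈ C_{n+1}^{(α)} ) ≥ 1 − α. -/
open MeasureTheory
open scoped ENNReal

/-- The `k`-th order statistic (0-indexed) of the finite tuple `u`: the values of `u`
arranged in nondecreasing order (ties allowed), evaluated at position `k`. -/
noncomputable def orderStat {n : ℕ} (u : Fin n → ℝ) (k : Fin n) : ℝ :=
  u (Tuple.sort u k)

/-- The conformity score `R_i^{(y)} = ρ(Y_i, ψ̂_n^{(y)}(Z_i))`, where the meta-learner
`ψ` is trained on the sample `{(Z_1,Y_1),…,(Z_n,Y_n),(Z_{n+1},y)}` (the hypothetical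
value `y` is plugged in as the response of the `(n+1)`-st pair, via `Fin.snoc`). -/
noncomputable def confScore {n M : ℕ}
    (ψ : (Fin (n + 1) → (Fin M → ℝ) × ℝ) → (Fin M → ℝ) → ℝ) (ρ : ℝ → ℝ → ℝ)
    (Z : Fin (n + 1) → Fin M → ℝ) (Y : Fin n → ℝ) (y : ℝ) (i : Fin (n + 1)) : ℝ :=
  ρ ((Fin.snoc Y y : Fin (n + 1) → ℝ) i)
    (ψ (fun j => (Z j, (Fin.snoc Y y : Fin (n + 1) → ℝ) j)) (Z i))

/-- Auxiliary: the score function applied to a full data vector. -/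
noncomputable def scoreF {n M : ℕ}
    (ψ : (Fin (n + 1) → (Fin M → ℝ) × ℝ) → (Fin M → ℝ) → ℝ) (ρ : ℝ → ℝ → ℝ)
    (d : Fin (n + 1) → (Fin M → ℝ) × ℝ) (i : Fin (n + 1)) : ℝ :=
  ρ (d i).2 (ψ d (d i).1)

/-- Auxiliary: the rank (number of strictly smaller entries) of entry `j` of `r`. -/
noncomputable def rnk {N : ℕ} (r : Fin N → ℝ) (j : Fin N) : ℕ :=
  (Finset.univ.filter fun i => r i < r j).card

lemma le_orderStat_iff {n : ℕ} (u : Fin n → ℝ) (m : Fin n) (r : ℝ) :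
    r ≤ orderStat u m ↔ (Finset.univ.filter fun i => u i < r).card ≤ (m : ℕ) := by
  have hcard : (Finset.univ.filter fun i => u i < r).card
      = (Finset.univ.filter fun j => u (Tuple.sort u j) < r).card := by
    apply Finset.card_equiv (Tuple.sort u).symm
    intro i
    simp
  rw [hcard, orderStat]
  have hmono : Monotone (fun j => u (Tuple.sort u j)) := Tuple.monotone_sort u
  constructor
  · intro h
    calc (Finset.univ.filter fun j => u (Tuple.sort u j) < r).card
        ≤ (Finset.Iio m).card := by
          apply Finset.card_le_card
          intro j hj
          simp only [Finset.mem_filter, Finset.mem_univ, true_and] at hj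
          simp only [Finset.mem_Iio]
          by_contra hc
          push_neg at hc
          exact absurd (lt_of_lt_of_le hj h) (not_lt.mpr (hmono hc))
      _ = (m : ℕ) := Fin.card_Iio m
  · intro h
    by_contra hc
    push_neg at hc
    have hsub : Finset.Iic m ⊆ (Finset.univ.filter fun j => u (Tuple.sort u j) < r) := by
      intro j hj
      simp only [Finset.mem_Iic] at hj
      simp only [Finset.mem_filter, Finset.mem_univ, true_and]
      exact lt_of_le_of_lt (hmono hj) hc
    have := Finset.card_le_card hsub
    rw [Fin.card_Iic] at this
    omega

lemma count_high_rank_le {n : ℕ} (r : Fin (n+1) → ℝ) (k : ℕ) (hk1 : 1 ≤ k) (hk2 : k ≤ n+1) :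
    (Finset.univ.filter fun j => k ≤ rnk r j).card ≤ n + 1 - k := by
  set m : Fin (n+1) := ⟨k-1, by omega⟩ with hm
  set s := orderStat r m with hs
  have hsub : (Finset.univ.filter fun j => k ≤ rnk r j)
      ⊆ Finset.univ.filter fun j => ¬ (r j ≤ s) := by
    intro j hj
    simp only [Finset.mem_filter, Finset.mem_univ, true_and] at hj ⊢
    intro hle
    have h2 := (le_orderStat_iff r m (r j)).mp hle
    have h3 : (m : ℕ) = k - 1 := rfl
    unfold rnk at hj
    omega
  have hlow : k ≤ (Finset.univ.filter fun j => r j ≤ s).card := by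
    have himg : (Finset.Iic m).image (Tuple.sort r) ⊆ Finset.univ.filter fun j => r j ≤ s := by
      intro j hj
      simp only [Finset.mem_image, Finset.mem_Iic] at hj
      obtain ⟨i, hi, rfl⟩ := hj
      simp only [Finset.mem_filter, Finset.mem_univ, true_and]
      exact Tuple.monotone_sort r hi
    have hcardimg : ((Finset.Iic m).image (Tuple.sort r)).card = k := by
      rw [Finset.card_image_of_injective _ (Tuple.sort r).injective, Fin.card_Iic]
      have h0 : (m : ℕ) = k - 1 := rfl
      omega
    calc k = _ := hcardimg.symm
      _ ≤ _ := Finset.card_le_card himg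
  have hsplit := Finset.card_filter_add_card_filter_not
    (s := (Finset.univ : Finset (Fin (n+1)))) (p := fun j => r j ≤ s)
  have hc := Finset.card_le_card hsub
  simp only [Finset.card_univ, Fintype.card_fin] at hsplit
  omega

lemma rnk_comp {N : ℕ} (r : Fin N → ℝ) (σ : Equiv.Perm (Fin N)) (j : Fin N) :
    rnk (fun i => r (σ i)) j = rnk r (σ j) := by
  unfold rnk
  apply Finset.card_equiv σ
  intro i
  simp

/-- Proposition 2, marginal validity of the symmetric-stack conformal set.
Let `(Z_1,Y_1), …, (Z_{n+1},Y_{n+1})` be exchangeable random pairs, `ψ` a meta-learner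
trained on `{(Z_1,Y_1),…,(Z_n,Y_n),(Z_{n+1},y)}` invariant to the ordering of the `n+1`
pairs, and `ρ` a measurable conformity function.  With conformity scores
`R_i^{(y)} = ρ(Y_i, ψ̂_n^{(y)}(Z_i))`, order statistics `R_{(1)}^{(y)} ≤ ⋯ ≤ R_{(n)}^{(y)}`
of the first `n` scores, and `0 < α < 1` with `⌈(1−α)(n+1)⌉ ≤ n`, the prediction set
`C^{(α)} = { y : R_{n+1}^{(y)} ≤ R_{(⌈(1−α)(n+1)⌉)}^{(y)} }` satisfies
`Pr( Y_{n+1} ∈ C^{(α)} ) ≥ 1 − α`. -/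
theorem symmetric_stack_marginal_validity
    {Ω : Type*} [MeasurableSpace Ω] (μ : Measure Ω) [IsProbabilityMeasure μ]
    {n M : ℕ}
    (Z : Fin (n + 1) → Ω → (Fin M → ℝ)) (Y : Fin (n + 1) → Ω → ℝ)
    (hZ : ∀ i, Measurable (Z i)) (hY : ∀ i, Measurable (Y i))
    (hexch : ∀ σ : Equiv.Perm (Fin (n + 1)),
      Measure.map (fun ω => fun i => (Z (σ i) ω, Y (σ i) ω)) μ
        = Measure.map (fun ω => fun i => (Z i ω, Y i ω)) μ)
    (ψ : (Fin (n + 1) → (Fin M → ℝ) × ℝ) → (Fin M → ℝ) → ℝ)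
    (hψmeas : Measurable (fun p : (Fin (n + 1) → (Fin M → ℝ) × ℝ) × (Fin M → ℝ) => ψ p.1 p.2))
    (hψsymm : ∀ (σ : Equiv.Perm (Fin (n + 1))) (data : Fin (n + 1) → (Fin M → ℝ) × ℝ) z,
      ψ (fun i => data (σ i)) z = ψ data z)
    (ρ : ℝ → ℝ → ℝ) (hρ : Measurable (fun p : ℝ × ℝ => ρ p.1 p.2))
    (α : ℝ) (hα0 : 0 < α) (hα1 : α < 1)
    (hceil : ⌈(1 - α) * (n + 1 : ℝ)⌉₊ ≤ n) :
    1 - α ≤ (μ {ω |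
        confScore ψ ρ (fun j => Z j ω) (fun i : Fin n => Y i.castSucc ω)
            (Y (Fin.last n) ω) (Fin.last n)
          ≤ orderStat
              (fun i : Fin n =>
                confScore ψ ρ (fun j => Z j ω) (fun i : Fin n => Y i.castSucc ω)
                  (Y (Fin.last n) ω) i.castSucc)
              ⟨⌈(1 - α) * (n + 1 : ℝ)⌉₊ - 1, by
                have h1 : 0 < ⌈(1 - α) * (n + 1 : ℝ)⌉₊ :=
                  Nat.ceil_pos.mpr (mul_pos (by linarith) (by positivity))
                omega⟩}).toReal := by
  have hk1 : 1 ≤ ⌈(1 - α) * (n + 1 : ℝ)⌉₊ :=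
    Nat.ceil_pos.mpr (mul_pos (by linarith) (by positivity))
  set k := ⌈(1 - α) * (n + 1 : ℝ)⌉₊ with hk
  -- the data map
  have hDmeas : Measurable (fun ω => fun i : Fin (n+1) => (Z i ω, Y i ω)) :=
    measurable_pi_lambda _ fun i => (hZ i).prodMk (hY i)
  -- measurability of scores
  have hFmeas : ∀ i : Fin (n+1), Measurable (fun d => scoreF ψ ρ d i) := by
    intro i
    unfold scoreF
    exact hρ.comp (((measurable_pi_apply i).snd).prodMk
      (hψmeas.comp (measurable_id.prodMk ((measurable_pi_apply i).fst))))
  -- equivariance of scores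
  have hFequiv : ∀ (σ : Equiv.Perm (Fin (n+1))) (d : Fin (n+1) → (Fin M → ℝ) × ℝ),
      (fun i => scoreF ψ ρ (fun j => d (σ j)) i) = fun i => scoreF ψ ρ d (σ i) := by
    intro σ d
    funext i
    simp [scoreF, hψsymm σ d]
  -- measurability of the bad sets
  have hrmeas : ∀ j : Fin (n+1), Measurable (fun d => rnk (scoreF ψ ρ d) j) := by
    intro j
    have heq : (fun d => rnk (scoreF ψ ρ d) j)
        = fun d => ∑ i : Fin (n+1), if scoreF ψ ρ d i < scoreF ψ ρ d j then 1 else 0 := by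
      funext d
      unfold rnk
      rw [Finset.card_filter]
    rw [heq]
    exact Finset.measurable_sum _ fun i _ =>
      Measurable.ite (measurableSet_lt (hFmeas i) (hFmeas j)) measurable_const measurable_const
  have hSmeas : ∀ j : Fin (n+1), MeasurableSet {d : Fin (n+1) → (Fin M → ℝ) × ℝ |
      k ≤ rnk (scoreF ψ ρ d) j} := by
    intro j
    exact (hrmeas j) measurableSet_Ici
  have hAmeas : ∀ j : Fin (n+1), MeasurableSet
      ((fun ω => fun i : Fin (n+1) => (Z i ω, Y i ω)) ⁻¹' {d | k ≤ rnk (scoreF ψ ρ d) j}) :=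
    fun j => hDmeas (hSmeas j)
  -- exchangeability: all bad events have the same probability
  have hswap : ∀ j : Fin (n+1),
      μ ((fun ω => fun i : Fin (n+1) => (Z i ω, Y i ω)) ⁻¹' {d | k ≤ rnk (scoreF ψ ρ d) (Fin.last n)})
        = μ ((fun ω => fun i : Fin (n+1) => (Z i ω, Y i ω)) ⁻¹' {d | k ≤ rnk (scoreF ψ ρ d) j}) := by
    intro j
    set σ := Equiv.swap j (Fin.last n) with hσ
    have hMσ : Measurable (fun ω => fun i : Fin (n+1) => (Z (σ i) ω, Y (σ i) ω)) :=
      measurable_pi_lambda _ fun i => (hZ (σ i)).prodMk (hY (σ i))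
    have h2 : Measure.map (fun ω => fun i : Fin (n+1) => (Z (σ i) ω, Y (σ i) ω)) μ
          {d | k ≤ rnk (scoreF ψ ρ d) (Fin.last n)}
        = Measure.map (fun ω => fun i : Fin (n+1) => (Z i ω, Y i ω)) μ
          {d | k ≤ rnk (scoreF ψ ρ d) (Fin.last n)} := by
      rw [hexch σ]
    rw [Measure.map_apply hMσ (hSmeas (Fin.last n)),
        Measure.map_apply hDmeas (hSmeas (Fin.last n))] at h2
    have hpre : (fun ω => fun i : Fin (n+1) => (Z (σ i) ω, Y (σ i) ω)) ⁻¹'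
          {d | k ≤ rnk (scoreF ψ ρ d) (Fin.last n)}
        = (fun ω => fun i : Fin (n+1) => (Z i ω, Y i ω)) ⁻¹' {d | k ≤ rnk (scoreF ψ ρ d) j} := by
      ext ω
      simp only [Set.mem_preimage, Set.mem_setOf_eq]
      have h3 : (fun i => scoreF ψ ρ (fun i' : Fin (n+1) => (Z (σ i') ω, Y (σ i') ω)) i)
          = fun i => scoreF ψ ρ (fun i' : Fin (n+1) => (Z i' ω, Y i' ω)) (σ i) :=
        hFequiv σ (fun i' => (Z i' ω, Y i' ω))
      have h4 : rnk (scoreF ψ ρ (fun i' : Fin (n+1) => (Z (σ i') ω, Y (σ i') ω))) (Fin.last n)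
          = rnk (scoreF ψ ρ (fun i' : Fin (n+1) => (Z i' ω, Y i' ω))) j := by
        have h5 : rnk (scoreF ψ ρ (fun i' : Fin (n+1) => (Z (σ i') ω, Y (σ i') ω))) (Fin.last n)
            = rnk (fun i => scoreF ψ ρ (fun i' : Fin (n+1) => (Z i' ω, Y i' ω)) (σ i))
                (Fin.last n) := by
          congr 1
        rw [h5, rnk_comp _ σ (Fin.last n), hσ, Equiv.swap_apply_right]
      rw [h4]
    rw [hpre] at h2
    exact h2.symm
  -- the union bound via the counting lemma
  have hsum : ((n + 1 : ℕ) : ℝ≥0∞) *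
      μ ((fun ω => fun i : Fin (n+1) => (Z i ω, Y i ω)) ⁻¹'
        {d | k ≤ rnk (scoreF ψ ρ d) (Fin.last n)})
      ≤ ((n + 1 - k : ℕ) : ℝ≥0∞) := by
    have hconst : ∑ j : Fin (n+1),
        μ ((fun ω => fun i : Fin (n+1) => (Z i ω, Y i ω)) ⁻¹' {d | k ≤ rnk (scoreF ψ ρ d) j})
        = ((n + 1 : ℕ) : ℝ≥0∞) * μ ((fun ω => fun i : Fin (n+1) => (Z i ω, Y i ω)) ⁻¹'
            {d | k ≤ rnk (scoreF ψ ρ d) (Fin.last n)}) := by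
      rw [Finset.sum_congr rfl fun j _ => (hswap j).symm]
      rw [Finset.sum_const, Finset.card_univ, Fintype.card_fin, nsmul_eq_mul]
    rw [← hconst]
    calc ∑ j : Fin (n+1),
        μ ((fun ω => fun i : Fin (n+1) => (Z i ω, Y i ω)) ⁻¹' {d | k ≤ rnk (scoreF ψ ρ d) j})
        = ∑ j : Fin (n+1), ∫⁻ ω, Set.indicator
            ((fun ω => fun i : Fin (n+1) => (Z i ω, Y i ω)) ⁻¹' {d | k ≤ rnk (scoreF ψ ρ d) j})
            (1 : Ω → ℝ≥0∞) ω ∂μ :=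
          Finset.sum_congr rfl fun j _ => (lintegral_indicator_one (hAmeas j)).symm
      _ = ∫⁻ ω, ∑ j : Fin (n+1), Set.indicator
            ((fun ω => fun i : Fin (n+1) => (Z i ω, Y i ω)) ⁻¹' {d | k ≤ rnk (scoreF ψ ρ d) j})
            (1 : Ω → ℝ≥0∞) ω ∂μ :=
          (lintegral_finset_sum _ fun j _ => measurable_one.indicator (hAmeas j)).symm
      _ ≤ ∫⁻ _, ((n + 1 - k : ℕ) : ℝ≥0∞) ∂μ := by
          refine lintegral_mono fun ω => le_trans (le_of_eq ?_)
            (Nat.cast_le.mpr (count_high_rank_le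
              (scoreF ψ ρ (fun i : Fin (n+1) => (Z i ω, Y i ω))) k hk1 (by omega)))
          have hpt : ∀ j : Fin (n+1), Set.indicator
              ((fun ω => fun i : Fin (n+1) => (Z i ω, Y i ω)) ⁻¹'
                {d | k ≤ rnk (scoreF ψ ρ d) j}) (1 : Ω → ℝ≥0∞) ω
              = (((if k ≤ rnk (scoreF ψ ρ (fun i : Fin (n+1) => (Z i ω, Y i ω))) j
                    then 1 else 0 : ℕ)) : ℝ≥0∞) := by
            intro j
            by_cases hmem : k ≤ rnk (scoreF ψ ρ (fun i : Fin (n+1) => (Z i ω, Y i ω))) j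
            · rw [Set.indicator_of_mem (show ω ∈ _ from hmem)]
              simp [hmem]
            · rw [Set.indicator_of_notMem (show ω ∉ _ from hmem)]
              simp [hmem]
          show (∑ j : Fin (n+1), Set.indicator
              ((fun ω => fun i : Fin (n+1) => (Z i ω, Y i ω)) ⁻¹'
                {d | k ≤ rnk (scoreF ψ ρ d) j}) (1 : Ω → ℝ≥0∞) ω)
            = (((Finset.univ.filter fun j : Fin (n+1) =>
                k ≤ rnk (scoreF ψ ρ (fun i : Fin (n+1) => (Z i ω, Y i ω))) j).card : ℕ) : ℝ≥0∞)
          rw [Finset.sum_congr rfl fun j _ => hpt j, Finset.card_filter, Nat.cast_sum]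
      _ = ((n + 1 - k : ℕ) : ℝ≥0∞) := by simp
  -- real-valued bound on the bad event
  have hbad : (μ ((fun ω => fun i : Fin (n+1) => (Z i ω, Y i ω)) ⁻¹'
      {d | k ≤ rnk (scoreF ψ ρ d) (Fin.last n)})).toReal ≤ α := by
    have hfin : ((n + 1 - k : ℕ) : ℝ≥0∞) ≠ ⊤ := ENNReal.natCast_ne_top _
    have h1 := ENNReal.toReal_mono hfin hsum
    rw [ENNReal.toReal_mul, ENNReal.toReal_natCast, ENNReal.toReal_natCast] at h1
    have h2 : ((n + 1 : ℕ) : ℝ) = (n : ℝ) + 1 := by push_cast; ring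
    have h3 : ((n + 1 - k : ℕ) : ℝ) = (n : ℝ) + 1 - k := by
      have hkn : k ≤ n + 1 := by omega
      rw [Nat.cast_sub hkn]
      push_cast
      ring
    rw [h2, h3] at h1
    have h4 : (1 - α) * (n + 1 : ℝ) ≤ k := Nat.le_ceil _
    have h5 : (0 : ℝ) < n + 1 := by positivity
    nlinarith [ENNReal.toReal_nonneg (a := μ ((fun ω => fun i : Fin (n+1) => (Z i ω, Y i ω)) ⁻¹'
      {d | k ≤ rnk (scoreF ψ ρ d) (Fin.last n)}))]
  -- identify the event with the complement of the bad event
  have hset : {ω |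
        confScore ψ ρ (fun j => Z j ω) (fun i : Fin n => Y i.castSucc ω)
            (Y (Fin.last n) ω) (Fin.last n)
          ≤ orderStat
              (fun i : Fin n =>
                confScore ψ ρ (fun j => Z j ω) (fun i : Fin n => Y i.castSucc ω)
                  (Y (Fin.last n) ω) i.castSucc)
              ⟨k - 1, by omega⟩}
      = ((fun ω => fun i : Fin (n+1) => (Z i ω, Y i ω)) ⁻¹'
          {d | k ≤ rnk (scoreF ψ ρ d) (Fin.last n)})ᶜ := by
    ext ω
    simp only [Set.mem_setOf_eq, Set.mem_compl_iff, Set.mem_preimage, not_le]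
    have hsnoc : (Fin.snoc (fun i : Fin n => Y i.castSucc ω) (Y (Fin.last n) ω) :
        Fin (n+1) → ℝ) = fun j => Y j ω := by
      funext j
      refine Fin.lastCases ?_ (fun i => ?_) j <;> simp
    have hconf : ∀ i, confScore ψ ρ (fun j => Z j ω) (fun i : Fin n => Y i.castSucc ω)
        (Y (Fin.last n) ω) i = scoreF ψ ρ (fun i' : Fin (n+1) => (Z i' ω, Y i' ω)) i := by
      intro i
      simp only [confScore, scoreF, hsnoc]
    have horder : (fun i : Fin n =>
          confScore ψ ρ (fun j => Z j ω) (fun i : Fin n => Y i.castSucc ω)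
            (Y (Fin.last n) ω) i.castSucc)
        = fun i : Fin n => scoreF ψ ρ (fun i' : Fin (n+1) => (Z i' ω, Y i' ω)) i.castSucc :=
      funext fun i => hconf i.castSucc
    rw [hconf (Fin.last n), horder, le_orderStat_iff]
    have hext : (Finset.univ.filter fun i : Fin n =>
          scoreF ψ ρ (fun i' : Fin (n+1) => (Z i' ω, Y i' ω)) i.castSucc
            < scoreF ψ ρ (fun i' : Fin (n+1) => (Z i' ω, Y i' ω)) (Fin.last n)).card
        = rnk (scoreF ψ ρ (fun i' : Fin (n+1) => (Z i' ω, Y i' ω))) (Fin.last n) := by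
      unfold rnk
      rw [Finset.card_filter, Finset.card_filter, Fin.sum_univ_castSucc]
      simp
    rw [hext]
    have hval : ((⟨k - 1, by omega⟩ : Fin n) : ℕ) = k - 1 := rfl
    rw [hval]
    omega
  rw [hset, prob_compl_eq_one_sub (hAmeas (Fin.last n))]
  rw [ENNReal.toReal_sub_of_le prob_le_one (by simp)]
  simp only [ENNReal.toReal_one]
  linarith
end

section
/- Let R and r be real random variables on a common probability space with Pr(R ≤ r) ≥ 1 − α for some 0 < α < 1, and let R̃ and r̃ be real random variables on the same space (the conformity scores of the feasible stack corresponding to R = R_{n+1}^{(Y_{n+1})} and r = R_{(⌈(1−α)(n+1)⌉)}^{(Y_{n+1})}). Fix ε > 0 and suppose there exists δ = δ(ε) > 0 such that Pr( max{ |R̃ − R|, |r̃ − r| } < ε/2 ) ≥ 1 − δ. Define h(ε) = Pr( r − ε < R ≤ r ). Then Pr( R̃ ≤ r̃ ) ≥ 1 − α − δ − h(ε). -/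
open MeasureTheory

/-- Proposition 3, approximate marginal validity of the feasible stack.
Let `R` and `r` be real random variables with `Pr(R ≤ r) ≥ 1 − α` for some `0 < α < 1`
(the symmetric-stack conformity score of the future pair and the order-statistic
threshold), and let `R'` and `r'` be the corresponding conformity scores of the feasible
stack, on the same probability space. Fix `ε > 0` and suppose there is `δ > 0` with
`Pr( max{|R' − R|, |r' − r|} < ε/2 ) ≥ 1 − δ`. With `h(ε) = Pr( r − ε < R ≤ r )`, we have
`Pr( R' ≤ r' ) ≥ 1 − α − δ − h(ε)`. -/
theorem feasible_stack_approximate_validity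
    {Ω : Type*} [MeasurableSpace Ω] (μ : Measure Ω) [IsProbabilityMeasure μ]
    (R r R' r' : Ω → ℝ)
    (hR : Measurable R) (hr : Measurable r) (hR' : Measurable R') (hr' : Measurable r')
    (α : ℝ) (hα0 : 0 < α) (hα1 : α < 1)
    (hcov : 1 - α ≤ (μ {ω | R ω ≤ r ω}).toReal)
    (ε : ℝ) (hε : 0 < ε) (δ : ℝ) (hδ : 0 < δ)
    (hstab : 1 - δ ≤ (μ {ω | max |R' ω - R ω| |r' ω - r ω| < ε / 2}).toReal) :
    1 - α - δ - (μ {ω | r ω - ε < R ω ∧ R ω ≤ r ω}).toReal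
      ≤ (μ {ω | R' ω ≤ r' ω}).toReal := by
  set S : Set Ω := {ω | max |R' ω - R ω| |r' ω - r ω| < ε / 2} with hS
  set B : Set Ω := {ω | R ω ≤ r ω - ε} with hBdef
  set H : Set Ω := {ω | r ω - ε < R ω ∧ R ω ≤ r ω} with hHdef
  have hSm : MeasurableSet S := by
    apply measurableSet_lt (Measurable.max ?_ ?_) measurable_const
    · exact (hR'.sub hR).abs
    · exact (hr'.sub hr).abs
  have hBm : MeasurableSet B := measurableSet_le hR (hr.sub measurable_const)
  -- B ∩ S ⊆ target
  have hsub : B ∩ S ⊆ {ω | R' ω ≤ r' ω} := by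
    rintro ω ⟨hB, hSω⟩
    have h1 : |R' ω - R ω| < ε / 2 := lt_of_le_of_lt (le_max_left _ _) hSω
    have h2 : |r' ω - r ω| < ε / 2 := lt_of_le_of_lt (le_max_right _ _) hSω
    have h1' := abs_lt.mp h1
    have h2' := abs_lt.mp h2
    have hB' : R ω ≤ r ω - ε := hB
    simp only [Set.mem_setOf_eq]
    linarith [h1'.1, h1'.2, h2'.1, h2'.2]
  -- C ⊆ B ∪ H
  have hCsub : {ω | R ω ≤ r ω} ⊆ B ∪ H := by
    intro ω hω
    by_cases h : R ω ≤ r ω - ε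
    · exact Or.inl h
    · exact Or.inr ⟨lt_of_not_ge h, hω⟩
  have fin : ∀ s : Set Ω, μ s ≠ ⊤ := fun s => measure_ne_top μ s
  -- toReal facts
  have h1 : (μ {ω | R ω ≤ r ω}).toReal ≤ (μ B).toReal + (μ H).toReal := by
    calc (μ {ω | R ω ≤ r ω}).toReal ≤ (μ (B ∪ H)).toReal :=
          ENNReal.toReal_mono (fin _) (measure_mono hCsub)
      _ ≤ (μ B).toReal + (μ H).toReal := by
          rw [← ENNReal.toReal_add (fin _) (fin _)]
          exact ENNReal.toReal_mono (by simp [fin B, fin H, ENNReal.add_ne_top]) (measure_union_le B H)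
  have h2 : (μ B).toReal + (μ S).toReal ≤ 1 + (μ (B ∩ S)).toReal := by
    have := measure_union_add_inter (μ := μ) B hSm
    have hle : μ (B ∪ S) + μ (B ∩ S) ≤ 1 + μ (B ∩ S) := by
      gcongr
      exact prob_le_one
    rw [this] at hle
    have := ENNReal.toReal_mono (by simp [fin (B ∩ S)]) hle
    rwa [ENNReal.toReal_add (fin _) (fin _), ENNReal.toReal_add (by simp) (fin _),
      ENNReal.toReal_one] at this
  have h3 : (μ (B ∩ S)).toReal ≤ (μ {ω | R' ω ≤ r' ω}).toReal :=
    ENNReal.toReal_mono (fin _) (measure_mono hsub)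
  linarith
end

section
/- Let U_1, U_2, …, U_{n+1} be exchangeable real random variables and let U_{(1)} ≤ ⋯ ≤ U_{(n+1)} denote the order statistics of the full set {U_1,…,U_{n+1}}. Then for each k = 1, …, n+1, Pr( U_{n+1} ≤ U_{(k)} ) ≥ k/(n+1). -/
open MeasureTheory

open Finset ENNReal

variable {n : ℕ}

/-- number of indices with value strictly below `u j` -/
noncomputable def cnt (u : Fin (n+1) → ℝ) (j : Fin (n+1)) : ℕ :=
  (univ.filter (fun i => u i < u j)).card

lemma le_orderStat_iff_s7 (u : Fin (n+1) → ℝ) (j k : Fin (n+1)) :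
    u j ≤ orderStat u k ↔ cnt u j ≤ (k : ℕ) := by
  have mono := Tuple.monotone_sort u
  constructor
  · intro h
    have hle : cnt u j ≤ (Finset.Iio k).card := by
      apply Finset.card_le_card_of_injOn (fun i => (Tuple.sort u).symm i)
      · intro i hi
        simp only [Finset.mem_coe, mem_filter, mem_univ, true_and] at hi
        simp only [Finset.mem_coe, Finset.mem_Iio]
        by_contra hk
        push_neg at hk
        have := mono hk
        simp only [Function.comp_apply, Equiv.apply_symm_apply] at this
        have h3 : orderStat u k ≤ u i := this
        exact lt_irrefl _ (h3.trans_lt (hi.trans_le h))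
      · intro a _ b _ hab
        exact (Equiv.injective _) hab
    rwa [Fin.card_Iio] at hle
  · intro h
    by_contra h2
    push_neg at h2
    have hge : (Finset.Iic k).card ≤ cnt u j := by
      apply Finset.card_le_card_of_injOn (fun m => Tuple.sort u m)
      · intro m hm
        simp only [Finset.mem_coe, Finset.mem_Iic] at hm
        simp only [Finset.mem_coe, mem_filter, mem_univ, true_and]
        exact lt_of_le_of_lt (mono hm) h2
      · intro a _ b _ hab
        exact (Equiv.injective _) hab
    rw [Fin.card_Iic] at hge
    omega

lemma count_ge (u : Fin (n+1) → ℝ) (k : Fin (n+1)) :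
    (k : ℕ) + 1 ≤ (univ.filter (fun j => cnt u j ≤ (k : ℕ))).card := by
  have mono := Tuple.monotone_sort u
  have : (Finset.Iic k).card ≤ (univ.filter (fun j => cnt u j ≤ (k : ℕ))).card := by
    apply Finset.card_le_card_of_injOn (fun m => Tuple.sort u m)
    · intro m hm
      simp only [Finset.mem_coe, Finset.mem_Iic] at hm
      simp only [Finset.mem_coe, mem_filter, mem_univ, true_and]
      rw [← le_orderStat_iff_s7]
      exact mono hm
    · intro a _ b _ hab
      exact (Equiv.injective _) hab
  rwa [Fin.card_Iic] at this

lemma cnt_perm (u : Fin (n+1) → ℝ) (σ : Equiv.Perm (Fin (n+1))) (j : Fin (n+1)) :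
    cnt (fun i => u (σ i)) j = cnt u (σ j) := by
  unfold cnt
  apply Finset.card_bij (fun i _ => σ i)
  · intro a ha; simpa using (by simpa using ha : u (σ a) < u (σ j))
  · intro a _ b _ hab; exact σ.injective hab
  · intro b hb
    refine ⟨σ.symm b, ?_, by simp⟩
    simp only [mem_filter, mem_univ, true_and, Equiv.apply_symm_apply]
    simpa using hb

/-- Let `U_1, …, U_{n+1}` be exchangeable real random variables and let
`U_{(1)} ≤ ⋯ ≤ U_{(n+1)}` be the order statistics of the full set `U_1, …, U_{n+1}`.
Then for each `k = 1, …, n+1` (here `k : Fin (n+1)`, 0-indexed),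
`Pr( U_{n+1} ≤ U_{(k)} ) ≥ k/(n+1)`. -/
theorem prob_last_le_orderStat_full
    {Ω : Type*} [MeasurableSpace Ω] (μ : Measure Ω) [IsProbabilityMeasure μ]
    {n : ℕ} (U : Fin (n + 1) → Ω → ℝ) (hU : ∀ i, Measurable (U i))
    (hexch : ∀ σ : Equiv.Perm (Fin (n + 1)),
      Measure.map (fun ω => fun i => U (σ i) ω) μ = Measure.map (fun ω => fun i => U i ω) μ)
    (k : Fin (n + 1)) :
    ((k : ℕ) + 1 : ℝ) / (n + 1)
      ≤ (μ {ω | U (Fin.last n) ω ≤ orderStat (fun i => U i ω) k}).toReal := by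
  classical
  set S : Set (Fin (n+1) → ℝ) := {u | cnt u (Fin.last n) ≤ (k : ℕ)} with hSdef
  have hcm : Measurable fun u : Fin (n+1) → ℝ => cnt u (Fin.last n) := by
    have heq : (fun u : Fin (n+1) → ℝ => cnt u (Fin.last n))
        = fun u => ∑ i, if u i < u (Fin.last n) then 1 else 0 := by
      funext u
      rw [Finset.sum_boole]
      simp [cnt]
    rw [heq]
    apply Finset.measurable_sum
    intro i _
    exact Measurable.ite (measurableSet_lt (measurable_pi_apply i) (measurable_pi_apply _))
      measurable_const measurable_const
  have hS : MeasurableSet S := hcm measurableSet_Iic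
  set A : Fin (n+1) → Set Ω := fun j => {ω | cnt (fun i => U i ω) j ≤ (k : ℕ)} with hAdef
  have hpre : ∀ j : Fin (n+1),
      (fun ω => fun i => U ((Equiv.swap j (Fin.last n)) i) ω) ⁻¹' S = A j := by
    intro j
    ext ω
    simp only [Set.mem_preimage, Set.mem_setOf_eq, hSdef, hAdef]
    have h := cnt_perm (fun i => U i ω) (Equiv.swap j (Fin.last n)) (Fin.last n)
    rw [Equiv.swap_apply_right] at h
    rw [show cnt (fun i => U ((Equiv.swap j (Fin.last n)) i) ω) (Fin.last n)
        = cnt (fun i => U i ω) j from h]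
  have hpre0 : (fun ω => fun i => U i ω) ⁻¹' S = A (Fin.last n) := rfl
  have hmeas0 : Measurable (fun ω => fun i => U i ω) := measurable_pi_lambda _ hU
  have hAmeas : ∀ j, MeasurableSet (A j) := by
    intro j
    rw [← hpre j]
    exact (measurable_pi_lambda _ fun i => hU _) hS
  have hAeq : ∀ j, μ (A j) = μ (A (Fin.last n)) := by
    intro j
    rw [← hpre j, ← hpre0,
      ← Measure.map_apply (measurable_pi_lambda _ fun i => hU _) hS,
      ← Measure.map_apply hmeas0 hS, hexch (Equiv.swap j (Fin.last n))]
  have key : ((k : ℕ) + 1 : ℝ≥0∞) ≤ ((n : ℝ≥0∞) + 1) * μ (A (Fin.last n)) := by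
    have hpt : ∀ ω, ((k : ℕ) + 1 : ℝ≥0∞) ≤ ∑ j, (A j).indicator (1 : Ω → ℝ≥0∞) ω := by
      intro ω
      set F := univ.filter (fun j => cnt (fun i => U i ω) j ≤ (k : ℕ)) with hF
      have h1 : ∀ j ∈ F, (A j).indicator (1 : Ω → ℝ≥0∞) ω = 1 := by
        intro j hj
        simp only [hF, mem_filter, mem_univ, true_and] at hj
        rw [Set.indicator_of_mem]
        · rfl
        · exact hj
      calc ((k : ℕ) + 1 : ℝ≥0∞) ≤ (F.card : ℝ≥0∞) := by
            exact_mod_cast count_ge (fun i => U i ω) k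
        _ = ∑ j ∈ F, (A j).indicator (1 : Ω → ℝ≥0∞) ω := by
            rw [Finset.sum_congr rfl h1, Finset.sum_const, Finset.card_eq_sum_ones]
            simp
        _ ≤ ∑ j, (A j).indicator (1 : Ω → ℝ≥0∞) ω :=
            Finset.sum_le_sum_of_subset (Finset.filter_subset _ _)
    calc ((k : ℕ) + 1 : ℝ≥0∞) = ∫⁻ _, ((k : ℕ) + 1 : ℝ≥0∞) ∂μ := by simp
      _ ≤ ∫⁻ ω, ∑ j, (A j).indicator (1 : Ω → ℝ≥0∞) ω ∂μ := lintegral_mono hpt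
      _ = ∑ j, μ (A j) := by
          rw [lintegral_finset_sum _ (fun j _ => (measurable_one.indicator (hAmeas j)))]
          exact Finset.sum_congr rfl fun j _ => lintegral_indicator_one (hAmeas j)
      _ = ∑ _j : Fin (n+1), μ (A (Fin.last n)) := Finset.sum_congr rfl fun j _ => hAeq j
      _ = ((n : ℝ≥0∞) + 1) * μ (A (Fin.last n)) := by
          rw [Finset.sum_const, Finset.card_univ, Fintype.card_fin]
          simp [nsmul_eq_mul]
  have hEA : {ω | U (Fin.last n) ω ≤ orderStat (fun i => U i ω) k} = A (Fin.last n) := by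
    ext ω
    simp only [Set.mem_setOf_eq, hAdef]
    exact le_orderStat_iff_s7 (fun i => U i ω) (Fin.last n) k
  rw [hEA, div_le_iff₀ (by positivity)]
  have hfin : ((n : ℝ≥0∞) + 1) * μ (A (Fin.last n)) ≠ ⊤ :=
    ENNReal.mul_ne_top (by simp) (measure_ne_top μ _)
  have h2 := (ENNReal.toReal_le_toReal (by simp) hfin).2 key
  rw [ENNReal.toReal_mul, ENNReal.toReal_add (by simp) (by simp),
    ENNReal.toReal_add (by simp) (by simp), ENNReal.toReal_natCast, ENNReal.toReal_natCast,
    ENNReal.toReal_one] at h2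
  linarith [h2]
end

section
/- Fix K ≥ 2 and n+1 = Kt. For an (n+1)×(n+1) permutation matrix q written in blocks q_1,…,q_K of t rows each, let φ_q(i) ∈ {1,…,K} be the fold of index i (φ_q(i)=k iff some row of q_k has a 1 in column i) and let q_{∖k} be the matrix obtained from q by deleting block q_k. For m = 1,…,M let μ̂_m : ℝ^{(n+1−t)×(d+1)} × ℝ^d → ℝ satisfy μ̂_m(S, x) = μ̂_m(ΠS, x) for every (n+1−t)×(n+1−t) permutation matrix Π. For a matrix t ∈ ℝ^{(n+1)×(d+1)} with rows (x_i, y_i), define g(t, q) as the (n+1)×(M+1) matrix whose i-th row is ( μ̂_1(q_{∖φ_q(i)} t, x_i), …, μ̂_M(q_{∖φ_q(i)} t, x_i), y_i ). Then for every (n+1)×(n+1) permutation matrix Π, every matrix t and every permutation matrix q: Π g(t, q) = g(Πt, qΠ^{-1}). -/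
open Matrix

private lemma submatrix_id_mul {l m p q : Type*} [Fintype m] (B : Matrix l m ℝ)
    (C : Matrix m p ℝ) (E : q → l) :
    B.submatrix E id * C = (B * C).submatrix E id := by
  ext i j; simp [Matrix.mul_apply]

private lemma permMatrix_inv_mul_cancel {n : ℕ} (Pi q : Equiv.Perm (Fin n)) :
    (Pi⁻¹ * q).permMatrix ℝ * Pi.permMatrix ℝ = q.permMatrix ℝ := by
  simp [Equiv.Perm.permMatrix, PEquiv.toMatrix_toPEquiv_mul]
  ext i j; simp [PEquiv.toMatrix, Equiv.toPEquiv, Matrix.mul_apply]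
  rw [Fintype.sum_eq_single (Pi.symm (q i)) (by intro b hb; simp [Ne.symm hb])]
  simp

/-- equivariance of the stack map.  If each base learner `μ̂_m` treats its
training data symmetrically (`μ̂_m(ΠS, x) = μ̂_m(S, x)` for every permutation matrix `Π`),
then for every permutation matrix `Π`, every data matrix `t` and every folding
permutation `q`: `Π g(t, q) = g(Πt, qΠ⁻¹)`.  (In terms of permutations, the permutation
whose matrix is `qΠ⁻¹` — the matrix of `q` times the inverse matrix of `Π` — is
`Π⁻¹ * q`.) -/
theorem stackMap_equivariant {n t d M K : ℕ} (hK : 2 ≤ K) (hn : n + 1 = K * t)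
    (ht : t ≤ n + 1)
    (muHat : Fin M → Matrix (Fin (n + 1 - t)) (Fin (d + 1)) ℝ → (Fin d → ℝ) → ℝ)
    (hsymm : ∀ (m : Fin M) (P : Equiv.Perm (Fin (n + 1 - t)))
      (S : Matrix (Fin (n + 1 - t)) (Fin (d + 1)) ℝ) (x : Fin d → ℝ),
      muHat m (P.permMatrix ℝ * S) x = muHat m S x)
    (Pi q : Equiv.Perm (Fin (n + 1)))
    (T : Matrix (Fin (n + 1)) (Fin (d + 1)) ℝ) :
    Pi.permMatrix ℝ * stackMap ht muHat T q
      = stackMap ht muHat (Pi.permMatrix ℝ * T) (Pi⁻¹ * q) := by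
  have hfold : ∀ i, fold t (Pi⁻¹ * q) i = fold t q (Pi i) := by
    intro i; simp [fold, ← Equiv.Perm.inv_def, _root_.mul_inv_rev, Equiv.Perm.mul_apply]
  have hmat : ∀ k : ℕ,
      ((Pi⁻¹ * q).permMatrix ℝ).submatrix (exclude ht k) id * (Pi.permMatrix ℝ * T)
        = (q.permMatrix ℝ).submatrix (exclude ht k) id * T := by
    intro k
    rw [submatrix_id_mul, submatrix_id_mul, ← Matrix.mul_assoc,
      permMatrix_inv_mul_cancel]
  have hT : Pi.permMatrix ℝ * T = T.submatrix Pi id :=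
    PEquiv.toMatrix_toPEquiv_mul _ _
  rw [show Pi.permMatrix ℝ * stackMap ht muHat T q
      = (stackMap ht muHat T q).submatrix Pi id from PEquiv.toMatrix_toPEquiv_mul _ _]
  ext i j
  simp only [stackMap, Matrix.submatrix_apply, Matrix.of_apply, id_eq, hfold]
  simp only [hmat]
  simp only [hT, Matrix.submatrix_apply, id_eq]
end

section
/- Let (Z_1, Y_1), …, (Z_{n+1}, Y_{n+1}) be exchangeable random pairs with Z_i ∈ ℝ^M and Y_i ∈ ℝ. Let ψ̂ : (ℝ^M × ℝ)^{n+1} × ℝ^M → ℝ be a measurable map that is invariant under any permutation of its n+1 training pairs, and let ρ : ℝ × ℝ → ℝ be measurable. Define R_i = ρ( Y_i, ψ̂( (Z_1,Y_1),…,(Z_{n+1},Y_{n+1}); Z_i ) ) for i = 1, …, n+1. Then the random variables R_1, R_2, …, R_{n+1} are exchangeable. -/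
open MeasureTheory

/-- Let `(Z_1, Y_1), …, (Z_{n+1}, Y_{n+1})` be exchangeable random pairs
with `Z_i ∈ ℝ^M`, `Y_i ∈ ℝ`.  Let `ψ` be a measurable meta-learner taking the `n+1`
training pairs and a feature vector, invariant under any permutation of the training
pairs, and let `ρ` be a measurable conformity function.  Define the conformity scores
`R_i = ρ(Y_i, ψ((Z_1,Y_1),…,(Z_{n+1},Y_{n+1}); Z_i))`.  Then `R_1, …, R_{n+1}` are
exchangeable. -/
theorem conformity_scores_exchangeable
    {Ω : Type*} [MeasurableSpace Ω] (μ : Measure Ω) [IsProbabilityMeasure μ]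
    {n M : ℕ}
    (Z : Fin (n + 1) → Ω → (Fin M → ℝ)) (Y : Fin (n + 1) → Ω → ℝ)
    (hZ : ∀ i, Measurable (Z i)) (hY : ∀ i, Measurable (Y i))
    (hexch : ∀ σ : Equiv.Perm (Fin (n + 1)),
      Measure.map (fun ω => fun i => (Z (σ i) ω, Y (σ i) ω)) μ
        = Measure.map (fun ω => fun i => (Z i ω, Y i ω)) μ)
    (ψ : (Fin (n + 1) → (Fin M → ℝ) × ℝ) → (Fin M → ℝ) → ℝ)
    (hψmeas : Measurable (fun p : (Fin (n + 1) → (Fin M → ℝ) × ℝ) × (Fin M → ℝ) => ψ p.1 p.2))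
    (hψsymm : ∀ (σ : Equiv.Perm (Fin (n + 1))) (data : Fin (n + 1) → (Fin M → ℝ) × ℝ) z,
      ψ (fun i => data (σ i)) z = ψ data z)
    (ρ : ℝ → ℝ → ℝ) (hρ : Measurable (fun p : ℝ × ℝ => ρ p.1 p.2)) :
    ∀ σ : Equiv.Perm (Fin (n + 1)),
      Measure.map (fun ω => fun i : Fin (n + 1) =>
          ρ (Y (σ i) ω) (ψ (fun j => (Z j ω, Y j ω)) (Z (σ i) ω))) μ
        = Measure.map (fun ω => fun i : Fin (n + 1) =>
            ρ (Y i ω) (ψ (fun j => (Z j ω, Y j ω)) (Z i ω))) μ := by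
  intro σ
  -- the score map on data vectors
  set F : (Fin (n + 1) → (Fin M → ℝ) × ℝ) → (Fin (n + 1) → ℝ) :=
    fun d i => ρ (d i).2 (ψ d (d i).1) with hF
  have hFmeas : Measurable F := by
    apply measurable_pi_lambda
    intro i
    have h1 : Measurable fun d : Fin (n + 1) → (Fin M → ℝ) × ℝ => ψ d (d i).1 :=
      hψmeas.comp (measurable_id.prodMk ((measurable_pi_apply i).fst))
    exact hρ.comp (((measurable_pi_apply i).snd).prodMk h1)
  have hdata : Measurable (fun ω => fun i => (Z i ω, Y i ω)) :=
    measurable_pi_lambda _ (fun i => (hZ i).prodMk (hY i))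
  have hdataσ : Measurable (fun ω => fun i => (Z (σ i) ω, Y (σ i) ω)) :=
    measurable_pi_lambda _ (fun i => (hZ (σ i)).prodMk (hY (σ i)))
  have key1 : (fun ω => fun i : Fin (n + 1) =>
      ρ (Y (σ i) ω) (ψ (fun j => (Z j ω, Y j ω)) (Z (σ i) ω)))
      = F ∘ (fun ω => fun i => (Z (σ i) ω, Y (σ i) ω)) := by
    funext ω
    simp only [hF, Function.comp_apply]
    funext i
    rw [hψsymm σ (fun j => (Z j ω, Y j ω))]
  have key2 : (fun ω => fun i : Fin (n + 1) =>
      ρ (Y i ω) (ψ (fun j => (Z j ω, Y j ω)) (Z i ω)))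
      = F ∘ (fun ω => fun i => (Z i ω, Y i ω)) := rfl
  rw [key1, key2, ← Measure.map_map hFmeas hdataσ, ← Measure.map_map hFmeas hdata,
    hexch σ]
end
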